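/- arXiv:1312.6314 — 2 statements merged into one kernel-verified Lean document; each statement's English description precedes it below -/
import Mathlib

section
/- Every infinitesimal isometric deformation of a triangle in ℝ³ is trivial: if p₁, p₂, p₃ ∈ ℝ³ are affinely independent and q₁, q₂, q₃ satisfy ⟨p_i − p_j, q_i − q_j⟩ = 0 for all i ≠ j, then there exist v, w ∈ ℝ³ with q_i = v + w × p_i for all i. -/
noncomputable section

abbrev E3 := EuclideanSpace ℝ (Fin 3)

/-- The cross product on `ℝ³`. -/
def cross (v w : E3) : E3 :=
  (WithLp.equiv 2 (Fin 3 → ℝ)).symm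
    (crossProduct ((WithLp.equiv 2 (Fin 3 → ℝ)) v) ((WithLp.equiv 2 (Fin 3 → ℝ)) w))

open Matrix in
lemma bac_cab (u v w : Fin 3 → ℝ) :
    u ⨯₃ (v ⨯₃ w) = (u ⬝ᵥ w) • v - (u ⬝ᵥ v) • w := by
  simp [cross_apply, dotProduct, Fin.sum_univ_three]
  ext i
  fin_cases i <;> simp <;> ring

open Matrix in
lemma perp_triple {a b z : Fin 3 → ℝ} (hn : (a ⨯₃ b) ⬝ᵥ (a ⨯₃ b) ≠ 0)
    (h1 : z ⬝ᵥ a = 0) (h2 : z ⬝ᵥ b = 0) (h3 : z ⬝ᵥ (a ⨯₃ b) = 0) : z = 0 := by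
  have hz : z ⨯₃ (a ⨯₃ b) = 0 := by
    rw [bac_cab, h1, h2]; simp
  have lag := cross_dot_cross z (a ⨯₃ b) z (a ⨯₃ b)
  rw [hz, zero_dotProduct, h3] at lag
  have hzz : z ⬝ᵥ z = 0 := by
    have : (z ⬝ᵥ z) * ((a ⨯₃ b) ⬝ᵥ (a ⨯₃ b)) = 0 := by linarith
    exact (mul_eq_zero.mp this).resolve_right hn
  exact dotProduct_self_eq_zero.mp hzz

open Matrix in
lemma key {a b u s : Fin 3 → ℝ} (hli : LinearIndependent ℝ ![a, b])
    (h1 : a ⬝ᵥ u = 0) (h2 : b ⬝ᵥ s = 0) (h3 : a ⬝ᵥ s + b ⬝ᵥ u = 0) :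
    ∃ W : Fin 3 → ℝ, W ⨯₃ a = u ∧ W ⨯₃ b = s := by
  set n : Fin 3 → ℝ := a ⨯₃ b with hn_def
  set N : ℝ := n ⬝ᵥ n with hN_def
  have hn : n ≠ 0 := crossProduct_ne_zero_iff_linearIndependent.mpr hli
  have hN : N ≠ 0 := fun h => hn (dotProduct_self_eq_zero.mp h)
  have an : a ⬝ᵥ n = 0 := dot_self_cross a b
  have bn : b ⬝ᵥ n = 0 := dot_cross_self a b
  have na : n ⬝ᵥ a = 0 := (dotProduct_comm n a).trans an
  have nb : n ⬝ᵥ b = 0 := (dotProduct_comm n b).trans bn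
  have ua : u ⬝ᵥ a = 0 := (dotProduct_comm u a).trans h1
  have sb : s ⬝ᵥ b = 0 := (dotProduct_comm s b).trans h2
  have hab : a ⬝ᵥ b = b ⬝ᵥ a := dotProduct_comm a b
  have hsa : s ⬝ᵥ a = a ⬝ᵥ s := dotProduct_comm s a
  have hub : u ⬝ᵥ b = b ⬝ᵥ u := dotProduct_comm u b
  have lag : N = (a ⬝ᵥ a) * (b ⬝ᵥ b) - (a ⬝ᵥ b) * (b ⬝ᵥ a) := cross_dot_cross a b a b
  have hba : b ⨯₃ a = -n := by rw [hn_def, ← cross_anticomm]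
  have hna : n ⨯₃ a = (a ⬝ᵥ a) • b - (a ⬝ᵥ b) • a := by
    rw [hn_def, ← neg_neg ((a ⨯₃ b) ⨯₃ a), cross_anticomm, bac_cab]
    abel
  have hnb : n ⨯₃ b = (a ⬝ᵥ b) • b - (b ⬝ᵥ b) • a := by
    rw [hn_def, ← neg_neg ((a ⨯₃ b) ⨯₃ b), cross_anticomm, bac_cab]
    rw [dotProduct_comm b a, hab]
    abel
  refine ⟨N⁻¹ • ((s ⬝ᵥ n) • a - (u ⬝ᵥ n) • b + (u ⬝ᵥ b) • n), ?_, ?_⟩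
  · have expand : (N⁻¹ • ((s ⬝ᵥ n) • a - (u ⬝ᵥ n) • b + (u ⬝ᵥ b) • n)) ⨯₃ a
        = N⁻¹ • ((s ⬝ᵥ n) • (a ⨯₃ a) - (u ⬝ᵥ n) • (b ⨯₃ a) + (u ⬝ᵥ b) • (n ⨯₃ a)) := by
      simp [map_add, map_sub, _root_.map_smul, LinearMap.add_apply, LinearMap.sub_apply,
        LinearMap.smul_apply]
    rw [expand, cross_self, hba, hna]
    have hz : (s ⬝ᵥ n) • (0 : Fin 3 → ℝ) - (u ⬝ᵥ n) • (-n)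
        + (u ⬝ᵥ b) • ((a ⬝ᵥ a) • b - (a ⬝ᵥ b) • a) - N • u = 0 := by
      apply perp_triple (a := a) (b := b) (by rwa [← hn_def, ← hN_def])
      · simp only [sub_dotProduct, add_dotProduct, smul_dotProduct, smul_eq_mul, neg_dotProduct,
          zero_dotProduct, smul_zero]
        linear_combination (u ⬝ᵥ n) * na - (u ⬝ᵥ b) * (a ⬝ᵥ a) * hab - N * ua
      · simp only [sub_dotProduct, add_dotProduct, smul_dotProduct, smul_eq_mul, neg_dotProduct,
          zero_dotProduct, smul_zero]
        linear_combination (u ⬝ᵥ n) * nb - (u ⬝ᵥ b) * lag - (u ⬝ᵥ b) * (a ⬝ᵥ b) * hab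
      · simp only [sub_dotProduct, add_dotProduct, smul_dotProduct, smul_eq_mul, neg_dotProduct,
          zero_dotProduct, smul_zero, ← hn_def, ← hN_def]
        linear_combination (u ⬝ᵥ b) * (a ⬝ᵥ a) * bn - (u ⬝ᵥ b) * (a ⬝ᵥ b) * an
    rw [sub_eq_zero] at hz
    rw [hz, smul_smul, inv_mul_cancel₀ hN, one_smul]
  · have expand : (N⁻¹ • ((s ⬝ᵥ n) • a - (u ⬝ᵥ n) • b + (u ⬝ᵥ b) • n)) ⨯₃ b
        = N⁻¹ • ((s ⬝ᵥ n) • (a ⨯₃ b) - (u ⬝ᵥ n) • (b ⨯₃ b) + (u ⬝ᵥ b) • (n ⨯₃ b)) := by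
      simp [map_add, map_sub, _root_.map_smul, LinearMap.add_apply, LinearMap.sub_apply,
        LinearMap.smul_apply]
    rw [expand, cross_self, ← hn_def, hnb]
    have hz : (s ⬝ᵥ n) • n - (u ⬝ᵥ n) • (0 : Fin 3 → ℝ)
        + (u ⬝ᵥ b) • ((a ⬝ᵥ b) • b - (b ⬝ᵥ b) • a) - N • s = 0 := by
      apply perp_triple (a := a) (b := b) (by rwa [← hn_def, ← hN_def])
      · simp only [sub_dotProduct, add_dotProduct, smul_dotProduct, smul_eq_mul, neg_dotProduct,
          zero_dotProduct, smul_zero]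
        linear_combination (s ⬝ᵥ n) * na + (u ⬝ᵥ b) * lag - N * hsa - N * hub - N * h3
      · simp only [sub_dotProduct, add_dotProduct, smul_dotProduct, smul_eq_mul, neg_dotProduct,
          zero_dotProduct, smul_zero]
        linear_combination (s ⬝ᵥ n) * nb - N * sb
      · simp only [sub_dotProduct, add_dotProduct, smul_dotProduct, smul_eq_mul, neg_dotProduct,
          zero_dotProduct, smul_zero, ← hn_def, ← hN_def]
        linear_combination (u ⬝ᵥ b) * (a ⬝ᵥ b) * bn - (u ⬝ᵥ b) * (b ⬝ᵥ b) * an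
    rw [sub_eq_zero] at hz
    rw [hz, smul_smul, inv_mul_cancel₀ hN, one_smul]

open Matrix in
/-- **Infinitesimal rigidity of a triangle in ℝ³.** If `p 0, p 1, p 2 ∈ ℝ³` are
affinely independent and `q 0, q 1, q 2` satisfy `⟪p_i - p_j, q_i - q_j⟫ = 0` for
all `i ≠ j`, then there exist `v, w ∈ ℝ³` with `q_i = v + w × p_i` for all `i`. -/
theorem triangle_infinitesimally_rigid
    (p q : Fin 3 → E3) (hp : AffineIndependent ℝ p)
    (hq : ∀ i j : Fin 3, i ≠ j → (inner ℝ (p i - p j) (q i - q j) : ℝ) = 0) :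
    ∃ v w : E3, ∀ i, q i = v + cross w (p i) := by
  classical
  set e := WithLp.equiv 2 (Fin 3 → ℝ) with he
  have hinner : ∀ x y : E3, (inner ℝ x y : ℝ) = (e x) ⬝ᵥ (e y) := by
    intro x y
    simp [PiLp.inner_apply, dotProduct, RCLike.inner_apply, he, mul_comm]
  set a : Fin 3 → ℝ := e (p 1) - e (p 0) with ha
  set b : Fin 3 → ℝ := e (p 2) - e (p 0) with hb
  set u : Fin 3 → ℝ := e (q 1) - e (q 0) with hu
  set s : Fin 3 → ℝ := e (q 2) - e (q 0) with hs
  have hesub : ∀ x y : E3, e (x - y) = e x - e y := fun x y => rfl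
  have h1 : a ⬝ᵥ u = 0 := by
    have := hq 1 0 (by decide); rw [hinner, hesub, hesub] at this; exact this
  have h2 : b ⬝ᵥ s = 0 := by
    have := hq 2 0 (by decide); rw [hinner, hesub, hesub] at this; exact this
  have h12 : (a - b) ⬝ᵥ (u - s) = 0 := by
    have := hq 1 2 (by decide); rw [hinner, hesub, hesub] at this
    have e1 : e (p 1) - e (p 2) = a - b := by rw [ha, hb]; abel
    have e2 : e (q 1) - e (q 2) = u - s := by rw [hu, hs]; abel
    rwa [e1, e2] at this
  have h3 : a ⬝ᵥ s + b ⬝ᵥ u = 0 := by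
    simp only [sub_dotProduct, dotProduct_sub] at h12
    linear_combination h1 + h2 - h12
  have hli : LinearIndependent ℝ ![a, b] := by
    rw [affineIndependent_iff_linearIndependent_vsub ℝ p 0] at hp
    have hg : Function.Injective
        (![⟨1, by decide⟩, ⟨2, by decide⟩] : Fin 2 → {x : Fin 3 // x ≠ 0}) := by decide
    have li2 := hp.comp _ hg
    have li3 := li2.map' (WithLp.linearEquiv 2 ℝ (Fin 3 → ℝ)).toLinearMap
      (LinearEquiv.ker _)
    convert li3 using 1
    funext j
    fin_cases j <;> simp [ha, hb, he]
    all_goals rfl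
  obtain ⟨W, hWa, hWb⟩ := key hli h1 h2 h3
  refine ⟨q 0 - cross (e.symm W) (p 0), e.symm W, ?_⟩
  have hcross : ∀ x : E3, cross (e.symm W) x = e.symm (W ⨯₃ (e x)) := by
    intro x; simp [cross, he]
  intro i
  have hgoal : ∀ i, e (q i) - e (q 0) = W ⨯₃ (e (p i)) - W ⨯₃ (e (p 0)) →
      q i = q 0 - cross (e.symm W) (p 0) + cross (e.symm W) (p i) := by
    intro i h
    apply e.injective
    have heq : e (q 0 - cross (e.symm W) (p 0) + cross (e.symm W) (p i))
        = e (q 0) - W ⨯₃ (e (p 0)) + W ⨯₃ (e (p i)) := by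
      rw [hcross, hcross]
      rfl
    rw [heq]
    rw [sub_eq_iff_eq_add] at h
    rw [h]; abel
  apply hgoal
  fin_cases i
  · simp
  · show u = _
    rw [← map_sub (crossProduct W)]
    exact hWa.symm
  · show s = _
    rw [← map_sub (crossProduct W)]
    exact hWb.symm

end
end

section
/- Every infinitesimal isometric deformation of a tetrahedron in ℝ³ is trivial: if p₁,…,p₄ ∈ ℝ³ are affinely independent and q₁,…,q₄ satisfy ⟨p_i − p_j, q_i − q_j⟩ = 0 for all i ≠ j (all six edges), then there exist v, w ∈ ℝ³ with q_i = v + w × p_i for all i. -/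
noncomputable section

open Matrix

private lemma cross_dot (x y z : Fin 3 → ℝ) : (x ⨯₃ y) ⬝ᵥ z = x ⬝ᵥ (y ⨯₃ z) := by
  rw [dotProduct_comm]
  exact triple_product_permutation z x y

private lemma dot_all_zero (a : Fin 3 → Fin 3 → ℝ) (ha : LinearIndependent ℝ a)
    (s : Fin 3 → ℝ) (h : ∀ j, s ⬝ᵥ a j = 0) : s = 0 := by
  have hspan : Submodule.span ℝ (Set.range a) = ⊤ :=
    ha.span_eq_top_of_card_eq_finrank (by simp)
  have hz : ∀ z ∈ Submodule.span ℝ (Set.range a), s ⬝ᵥ z = 0 := by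
    intro z hzmem
    induction hzmem using Submodule.span_induction with
    | mem x hx => obtain ⟨j, rfl⟩ := hx; exact h j
    | zero => simp
    | add x y _ _ hx hy => rw [dotProduct_add, hx, hy, add_zero]
    | smul c x _ hx => rw [dotProduct_smul, hx, smul_zero]
  exact dotProduct_self_eq_zero.mp (hz s (hspan ▸ Submodule.mem_top))

private lemma key_s16 (a r : Fin 3 → Fin 3 → ℝ) (ha : LinearIndependent ℝ a)
    (h0 : ∀ i, r i ⬝ᵥ a i = 0)
    (hsym : ∀ i j, i ≠ j → r i ⬝ᵥ a j + r j ⬝ᵥ a i = 0) :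
    ∃ w : Fin 3 → ℝ, ∀ i, r i = crossProduct w (a i) := by
  set d : ℝ := a 0 ⬝ᵥ (a 1 ⨯₃ a 2) with hd
  have hdet : d ≠ 0 := by
    have hM : LinearIndependent ℝ (fun i => (Matrix.of ![a 0, a 1, a 2]) i) := by
      convert ha using 1
      funext i; fin_cases i <;> rfl
    have hu := Matrix.linearIndependent_rows_iff_isUnit.mp hM
    rw [Matrix.isUnit_iff_isUnit_det, isUnit_iff_ne_zero] at hu
    rw [hd, triple_product_eq_det]
    exact hu
  have h012 : a 0 ⬝ᵥ (a 1 ⨯₃ a 2) = d := rfl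
  have h120 : a 1 ⬝ᵥ (a 2 ⨯₃ a 0) = d := (triple_product_permutation _ _ _).symm.trans h012
  have h201 : a 2 ⬝ᵥ (a 0 ⨯₃ a 1) = d := (triple_product_permutation _ _ _).symm.trans h120
  have h021 : a 0 ⬝ᵥ (a 2 ⨯₃ a 1) = -d := by
    rw [← cross_anticomm, dotProduct_neg, h012]
  have h102 : a 1 ⬝ᵥ (a 0 ⨯₃ a 2) = -d := by
    rw [← cross_anticomm, dotProduct_neg, h120]
  have h210 : a 2 ⬝ᵥ (a 1 ⨯₃ a 0) = -d := by
    rw [← cross_anticomm, dotProduct_neg, h201]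
  set w' : Fin 3 → ℝ :=
    (r 1 ⬝ᵥ a 2) • a 0 + (r 2 ⬝ᵥ a 0) • a 1 + (r 0 ⬝ᵥ a 1) • a 2 with hw'
  have hkey : ∀ i, d • r i = crossProduct w' (a i) := by
    have G : ∀ i j : Fin 3, d * (r i ⬝ᵥ a j) -
        ((r 1 ⬝ᵥ a 2) * (a 0 ⬝ᵥ (a i ⨯₃ a j)) + (r 2 ⬝ᵥ a 0) * (a 1 ⬝ᵥ (a i ⨯₃ a j))
          + (r 0 ⬝ᵥ a 1) * (a 2 ⬝ᵥ (a i ⨯₃ a j))) = 0 := by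
      have c00 : d * (r 0 ⬝ᵥ a 0) -
          ((r 1 ⬝ᵥ a 2) * (a 0 ⬝ᵥ (a 0 ⨯₃ a 0)) + (r 2 ⬝ᵥ a 0) * (a 1 ⬝ᵥ (a 0 ⨯₃ a 0))
            + (r 0 ⬝ᵥ a 1) * (a 2 ⬝ᵥ (a 0 ⨯₃ a 0))) = 0 := by
        simp only [cross_self, dotProduct_zero, mul_zero]
        linear_combination d * h0 0
      have c01 : d * (r 0 ⬝ᵥ a 1) -
          ((r 1 ⬝ᵥ a 2) * (a 0 ⬝ᵥ (a 0 ⨯₃ a 1)) + (r 2 ⬝ᵥ a 0) * (a 1 ⬝ᵥ (a 0 ⨯₃ a 1))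
            + (r 0 ⬝ᵥ a 1) * (a 2 ⬝ᵥ (a 0 ⨯₃ a 1))) = 0 := by
        simp only [dot_self_cross, dot_cross_self, h201, mul_zero]
        ring
      have c02 : d * (r 0 ⬝ᵥ a 2) -
          ((r 1 ⬝ᵥ a 2) * (a 0 ⬝ᵥ (a 0 ⨯₃ a 2)) + (r 2 ⬝ᵥ a 0) * (a 1 ⬝ᵥ (a 0 ⨯₃ a 2))
            + (r 0 ⬝ᵥ a 1) * (a 2 ⬝ᵥ (a 0 ⨯₃ a 2))) = 0 := by
        simp only [dot_self_cross, dot_cross_self, h102, mul_zero, mul_neg]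
        linear_combination d * hsym 0 2 (by decide)
      have c10 : d * (r 1 ⬝ᵥ a 0) -
          ((r 1 ⬝ᵥ a 2) * (a 0 ⬝ᵥ (a 1 ⨯₃ a 0)) + (r 2 ⬝ᵥ a 0) * (a 1 ⬝ᵥ (a 1 ⨯₃ a 0))
            + (r 0 ⬝ᵥ a 1) * (a 2 ⬝ᵥ (a 1 ⨯₃ a 0))) = 0 := by
        simp only [dot_self_cross, dot_cross_self, h210, mul_zero, mul_neg]
        linear_combination d * hsym 1 0 (by decide)
      have c11 : d * (r 1 ⬝ᵥ a 1) -
          ((r 1 ⬝ᵥ a 2) * (a 0 ⬝ᵥ (a 1 ⨯₃ a 1)) + (r 2 ⬝ᵥ a 0) * (a 1 ⬝ᵥ (a 1 ⨯₃ a 1))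
            + (r 0 ⬝ᵥ a 1) * (a 2 ⬝ᵥ (a 1 ⨯₃ a 1))) = 0 := by
        simp only [cross_self, dotProduct_zero, mul_zero]
        linear_combination d * h0 1
      have c12 : d * (r 1 ⬝ᵥ a 2) -
          ((r 1 ⬝ᵥ a 2) * (a 0 ⬝ᵥ (a 1 ⨯₃ a 2)) + (r 2 ⬝ᵥ a 0) * (a 1 ⬝ᵥ (a 1 ⨯₃ a 2))
            + (r 0 ⬝ᵥ a 1) * (a 2 ⬝ᵥ (a 1 ⨯₃ a 2))) = 0 := by
        simp only [dot_self_cross, dot_cross_self, h012, mul_zero]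
        ring
      have c20 : d * (r 2 ⬝ᵥ a 0) -
          ((r 1 ⬝ᵥ a 2) * (a 0 ⬝ᵥ (a 2 ⨯₃ a 0)) + (r 2 ⬝ᵥ a 0) * (a 1 ⬝ᵥ (a 2 ⨯₃ a 0))
            + (r 0 ⬝ᵥ a 1) * (a 2 ⬝ᵥ (a 2 ⨯₃ a 0))) = 0 := by
        simp only [dot_self_cross, dot_cross_self, h120, mul_zero]
        ring
      have c21 : d * (r 2 ⬝ᵥ a 1) -
          ((r 1 ⬝ᵥ a 2) * (a 0 ⬝ᵥ (a 2 ⨯₃ a 1)) + (r 2 ⬝ᵥ a 0) * (a 1 ⬝ᵥ (a 2 ⨯₃ a 1))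
            + (r 0 ⬝ᵥ a 1) * (a 2 ⬝ᵥ (a 2 ⨯₃ a 1))) = 0 := by
        simp only [dot_self_cross, dot_cross_self, h021, mul_zero, mul_neg]
        linear_combination d * hsym 2 1 (by decide)
      have c22 : d * (r 2 ⬝ᵥ a 2) -
          ((r 1 ⬝ᵥ a 2) * (a 0 ⬝ᵥ (a 2 ⨯₃ a 2)) + (r 2 ⬝ᵥ a 0) * (a 1 ⬝ᵥ (a 2 ⨯₃ a 2))
            + (r 0 ⬝ᵥ a 1) * (a 2 ⬝ᵥ (a 2 ⨯₃ a 2))) = 0 := by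
        simp only [cross_self, dotProduct_zero, mul_zero]
        linear_combination d * h0 2
      intro i j
      fin_cases i <;> fin_cases j <;>
        first
          | exact c00 | exact c01 | exact c02 | exact c10 | exact c11
          | exact c12 | exact c20 | exact c21 | exact c22
    intro i
    have hz : ∀ j, (d • r i - crossProduct w' (a i)) ⬝ᵥ a j = 0 := by
      intro j
      have expand : (crossProduct w' (a i)) ⬝ᵥ a j =
          (r 1 ⬝ᵥ a 2) * (a 0 ⬝ᵥ (a i ⨯₃ a j)) + (r 2 ⬝ᵥ a 0) * (a 1 ⬝ᵥ (a i ⨯₃ a j))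
            + (r 0 ⬝ᵥ a 1) * (a 2 ⬝ᵥ (a i ⨯₃ a j)) := by
        simp only [hw', map_add, LinearMap.map_smul, LinearMap.add_apply, LinearMap.smul_apply,
          add_dotProduct, smul_dotProduct, smul_eq_mul, cross_dot]
      rw [sub_dotProduct, smul_dotProduct, expand, smul_eq_mul]
      exact G i j
    exact sub_eq_zero.mp (dot_all_zero a ha _ hz)
  refine ⟨d⁻¹ • w', fun i => ?_⟩
  rw [LinearMap.map_smul, LinearMap.smul_apply, ← hkey i, smul_smul, inv_mul_cancel₀ hdet, one_smul]

/-- **Infinitesimal rigidity of a tetrahedron in ℝ³.** If `p 0, …, p 3 ∈ ℝ³` are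
affinely independent and `q 0, …, q 3` satisfy `⟪p_i - p_j, q_i - q_j⟫ = 0` for
all `i ≠ j`, then there exist `v, w ∈ ℝ³` with `q_i = v + w × p_i` for all `i`. -/
theorem tetrahedron_infinitesimally_rigid
    (p q : Fin 4 → E3) (hp : AffineIndependent ℝ p)
    (hq : ∀ i j : Fin 4, i ≠ j → (inner ℝ (p i - p j) (q i - q j) : ℝ) = 0) :
    ∃ v w : E3, ∀ i, q i = v + cross w (p i) := by
  classical
  set el := (WithLp.linearEquiv 2 ℝ (Fin 3 → ℝ)) with hel
  have hinner : ∀ x y : E3, (inner ℝ x y : ℝ) = (el x) ⬝ᵥ (el y) := by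
    intro x y
    simp only [PiLp.inner_apply, RCLike.inner_apply, conj_trivial, dotProduct]
    exact Finset.sum_congr rfl fun _ _ => mul_comm _ _
  set a : Fin 3 → Fin 3 → ℝ := fun i => el (p i.succ - p 0) with hadef
  set r : Fin 3 → Fin 3 → ℝ := fun i => el (q i.succ - q 0) with hrdef
  have ha : LinearIndependent ℝ a := by
    have h1 : LinearIndependent ℝ (fun i : {x : Fin 4 // x ≠ 0} => p i -ᵥ p 0) :=
      (affineIndependent_iff_linearIndependent_vsub ℝ p 0).mp hp
    have h2 := h1.comp
      (fun i : Fin 3 => (⟨i.succ, Fin.succ_ne_zero i⟩ : {x : Fin 4 // x ≠ 0}))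
      (by
        intro i j hij
        have := congrArg Subtype.val hij
        simpa [Fin.succ_inj] using this)
    have h3 := h2.map' el.toLinearMap el.ker
    exact h3
  have h0 : ∀ i, r i ⬝ᵥ a i = 0 := by
    intro i
    have := hq i.succ 0 (Fin.succ_ne_zero i)
    rw [hinner] at this
    rw [dotProduct_comm]
    exact this
  have hsym : ∀ i j, i ≠ j → r i ⬝ᵥ a j + r j ⬝ᵥ a i = 0 := by
    intro i j hij
    have hne : i.succ ≠ j.succ := fun h => hij (Fin.succ_inj.mp h)
    have := hq i.succ j.succ hne
    rw [hinner] at this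
    have hps : el (p i.succ - p j.succ) = el (p i.succ - p 0) - el (p j.succ - p 0) := by
      rw [← map_sub]; congr 1; abel
    have hqs : el (q i.succ - q j.succ) = el (q i.succ - q 0) - el (q j.succ - q 0) := by
      rw [← map_sub]; congr 1; abel
    rw [hps, hqs, sub_dotProduct, dotProduct_sub, dotProduct_sub] at this
    have e1 : el (p i.succ - p 0) ⬝ᵥ el (q i.succ - q 0) = r i ⬝ᵥ a i := by
      rw [dotProduct_comm]
    have e2 : el (p j.succ - p 0) ⬝ᵥ el (q j.succ - q 0) = r j ⬝ᵥ a j := by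
      rw [dotProduct_comm]
    have e3 : el (p i.succ - p 0) ⬝ᵥ el (q j.succ - q 0) = r j ⬝ᵥ a i := by
      rw [dotProduct_comm]
    have e4 : el (p j.succ - p 0) ⬝ᵥ el (q i.succ - q 0) = r i ⬝ᵥ a j := by
      rw [dotProduct_comm]
    rw [e1, e2, e3, e4] at this
    have hi := h0 i
    have hj := h0 j
    linarith
  obtain ⟨w, hw⟩ := key_s16 a r ha h0 hsym
  refine ⟨q 0 - cross ((WithLp.equiv 2 (Fin 3 → ℝ)).symm w) (p 0),
    (WithLp.equiv 2 (Fin 3 → ℝ)).symm w, ?_⟩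
  set W : E3 := (WithLp.equiv 2 (Fin 3 → ℝ)).symm w with hW
  have hcross : ∀ x : E3, el (cross W x) = crossProduct w (el x) := fun _ => rfl
  intro i
  induction i using Fin.cases with
  | zero => abel
  | succ j =>
    have h : q j.succ - q 0 = cross W (p j.succ) - cross W (p 0) := by
      apply el.injective
      show r j = el (cross W (p j.succ) - cross W (p 0))
      rw [map_sub, hcross, hcross, hw j]
      have haj : a j = el (p j.succ) - el (p 0) := map_sub el _ _
      rw [haj]
      exact map_sub (crossProduct w) _ _
    have h2 : q j.succ = cross W (p j.succ) - cross W (p 0) + q 0 := by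
      rw [← h]; abel
    rw [h2]; abel

end
end
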